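/- Let (T,d) be a compact metric space, m a Borel probability measure on T, φ a Young function with φ(1)=1, and R > 5. Fix s,t ∈ T with τ_{m,φ}(s,t) < ∞ and an integer l > c. Then: d_τ(s,t) R^τ + Σ_{k=τ}^{c} R^k r^l_k(s,t) ≤ (R/(R−5)) R^c ( (3/2) d(s,t) + 2 r^l_c(s,t) ). -/
import Mathlib


open MeasureTheory ENNReal Filter

noncomputable section

/-- A (finite) Young function: an increasing convex function `φ : [0,∞) → [0,∞)`
with `φ 0 = 0` and `φ x → ∞` as `x → ∞`. -/
def IsYoungFunction (φ : ℝ → ℝ) : Prop :=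
  MonotoneOn φ (Set.Ici 0) ∧ ConvexOn ℝ (Set.Ici 0) φ ∧ φ 0 = 0 ∧
    Tendsto φ atTop atTop

/-- Generalized inverse of a Young function, as a map `ℝ≥0∞ → ℝ≥0∞`
(so that in particular `φ⁻¹(∞) = ∞`). -/
def yinv (φ : ℝ → ℝ) (y : ℝ≥0∞) : ℝ≥0∞ :=
  sInf {x : ℝ≥0∞ | ∃ r : ℝ, 0 ≤ r ∧ x = ENNReal.ofReal r ∧ y ≤ ENNReal.ofReal (φ r)}

/-- The minorizing metric
`τ_{m,φ}(s,t) = max_{x ∈ {s,t}} ∫_0^{d(s,t)} φ⁻¹(1 / m(B(x,ε))) dε`,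
with the conventions `1/0 = ∞`, `φ⁻¹(∞) = ∞`. -/
def tauDist {T : Type*} [MetricSpace T] [MeasurableSpace T]
    (m : Measure T) (φ : ℝ → ℝ) (s t : T) : ℝ≥0∞ :=
  max (∫⁻ ε in Set.Ioc (0 : ℝ) (dist s t), yinv φ (1 / m (Metric.closedBall s ε)))
    (∫⁻ ε in Set.Ioc (0 : ℝ) (dist s t), yinv φ (1 / m (Metric.closedBall t ε)))

/-- `f^d(u,v) = |f(u) - f(v)| / d(u,v)`, equal to `0` on the diagonal. -/
def fdiv {T : Type*} [MetricSpace T] (f : T → ℝ) (p : T × T) : ℝ :=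
  |f p.1 - f p.2| / dist p.1 p.2

/-- The Luxemburg norm `|g|^ν_χ = inf {a > 0 : ∫ χ(|g|/a) dν ≤ 1}`, with value `∞`
if no such `a` exists. -/
def luxNorm {X : Type*} [MeasurableSpace X] (ν : Measure X) (χ : ℝ → ℝ)
    (g : X → ℝ) : ℝ≥0∞ :=
  sInf {a : ℝ≥0∞ | ∃ b : ℝ, 0 < b ∧ a = ENNReal.ofReal b ∧
    ∫⁻ u, ENNReal.ofReal (χ (|g u| / b)) ∂ν ≤ 1}

/-- The Amemiya norm `‖g‖^μ_χ = inf_{a>0} a (1 + ∫ χ(|g|/a) dμ)`. -/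
def amemiyaNorm {X : Type*} [MeasurableSpace X] (μ : Measure X) (χ : ℝ → ℝ)
    (g : X → ℝ) : ℝ≥0∞ :=
  sInf {c : ℝ≥0∞ | ∃ a : ℝ, 0 < a ∧
    c = ENNReal.ofReal a * (1 + ∫⁻ u, ENNReal.ofReal (χ (|g u| / a)) ∂μ)}

/-- `r_0(x) = D(T)` and, for `k ≥ 1`,
`r_k(x) = min {ε ≥ 0 : 1 / m(B(x,ε)) ≤ φ(R^k)}` (with `1/0 = ∞`). -/
def rad {T : Type*} [MetricSpace T] [MeasurableSpace T]
    (m : Measure T) (φ : ℝ → ℝ) (R : ℝ) : ℕ → T → ℝ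
  | 0, _ => Metric.diam (Set.univ : Set T)
  | k + 1, x => sInf {ε : ℝ | 0 ≤ ε ∧
      1 / m (Metric.closedBall x ε) ≤ ENNReal.ofReal (φ (R ^ (k + 1)))}

/-- `r^l_k(x) = ∑_{i=k}^{l} 2^(i-k) r_i(x)`. -/
def radl {T : Type*} [MetricSpace T] [MeasurableSpace T]
    (m : Measure T) (φ : ℝ → ℝ) (R : ℝ) (k l : ℕ) (x : T) : ℝ :=
  ∑ i ∈ Finset.Icc k l, (2 : ℝ) ^ (i - k) * rad m φ R i x

/-- The averaging operator `S_k f (x) = (1 / m(B_k(x))) ∫_{B_k(x)} f dm`,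
with the convention `0/0 = 0`. -/
def avg {T : Type*} [MetricSpace T] [MeasurableSpace T]
    (m : Measure T) (φ : ℝ → ℝ) (R : ℝ) (k : ℕ) (f : T → ℝ) (x : T) : ℝ :=
  (∫ u in Metric.closedBall x (rad m φ R k x), f u ∂m) /
    (m (Metric.closedBall x (rad m φ R k x))).toReal

/-- The iterated averaging operator `iterAvg k l f = S_l S_{l-1} ⋯ S_k f` (for `k ≤ l`). -/
def iterAvg {T : Type*} [MetricSpace T] [MeasurableSpace T]
    (m : Measure T) (φ : ℝ → ℝ) (R : ℝ) (k : ℕ) : ℕ → (T → ℝ) → T → ℝ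
  | 0, f => avg m φ R 0 f
  | l + 1, f =>
      if l + 1 ≤ k then avg m φ R (l + 1) f
      else avg m φ R (l + 1) (iterAvg m φ R k l f)

/-- The set `{k ≥ 1 : B^l_k(s) ∪ B^l_k(t) ⊆ B°(u, r_{k-1}(u)) for every u ∈ B^l_k(x)}`,
whose greatest element is `τ_x`. -/
def tauSet {T : Type*} [MetricSpace T] [MeasurableSpace T]
    (m : Measure T) (φ : ℝ → ℝ) (R : ℝ) (l : ℕ) (s t x : T) : Set ℕ :=
  {k : ℕ | 1 ≤ k ∧ ∀ u ∈ Metric.closedBall x (radl m φ R k l x),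
    Metric.closedBall s (radl m φ R k l s) ∪ Metric.closedBall t (radl m φ R k l t) ⊆
      Metric.ball u (rad m φ R (k - 1) u)}

/-! ### Auxiliary lemmas -/

set_option linter.unusedSectionVars false

section Aux
variable {T : Type*} [MetricSpace T] [CompactSpace T] [MeasurableSpace T]
variable (m : Measure T) (φ : ℝ → ℝ) (R : ℝ)

lemma radSet_bddBelow (k : ℕ) (x : T) : BddBelow {ε : ℝ | 0 ≤ ε ∧
    1 / m (Metric.closedBall x ε) ≤ ENNReal.ofReal (φ (R ^ (k + 1)))} :=
  ⟨0, fun _ hε => hε.1⟩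

lemma diam_mem_radSet [IsProbabilityMeasure m]
    (hmono : MonotoneOn φ (Set.Ici 0)) (hφ1 : φ 1 = 1) (hR : 1 ≤ R) (k : ℕ) (x : T) :
    Metric.diam (Set.univ : Set T) ∈ {ε : ℝ | 0 ≤ ε ∧
      1 / m (Metric.closedBall x ε) ≤ ENNReal.ofReal (φ (R ^ (k + 1)))} := by
  refine ⟨Metric.diam_nonneg, ?_⟩
  have hsub : (Set.univ : Set T) ⊆ Metric.closedBall x (Metric.diam (Set.univ : Set T)) :=
    fun y _ => Metric.mem_closedBall.2
      (Metric.dist_le_diam_of_mem isCompact_univ.isBounded (Set.mem_univ y) (Set.mem_univ x))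
  have hcb : m (Metric.closedBall x (Metric.diam (Set.univ : Set T))) = 1 := by
    refine le_antisymm prob_le_one ?_
    calc (1 : ℝ≥0∞) = m Set.univ := (measure_univ).symm
    _ ≤ _ := measure_mono hsub
  rw [hcb, div_one]
  rw [ENNReal.one_le_ofReal]
  calc (1:ℝ) = φ 1 := hφ1.symm
  _ ≤ φ (R ^ (k+1)) := hmono (by simp) (by positivity : (0:ℝ) ≤ R ^ (k+1))
        (one_le_pow₀ hR)

lemma radSet_nonempty [IsProbabilityMeasure m]
    (hmono : MonotoneOn φ (Set.Ici 0)) (hφ1 : φ 1 = 1) (hR : 1 ≤ R) (k : ℕ) (x : T) :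
    {ε : ℝ | 0 ≤ ε ∧
      1 / m (Metric.closedBall x ε) ≤ ENNReal.ofReal (φ (R ^ (k + 1)))}.Nonempty :=
  ⟨_, diam_mem_radSet m φ R hmono hφ1 hR k x⟩

lemma rad_nonneg (k : ℕ) (x : T) : 0 ≤ rad m φ R k x := by
  cases k with
  | zero => exact Metric.diam_nonneg
  | succ k => exact Real.sInf_nonneg (fun ε hε => hε.1)

lemma rad_le_diam [IsProbabilityMeasure m]
    (hmono : MonotoneOn φ (Set.Ici 0)) (hφ1 : φ 1 = 1) (hR : 1 ≤ R) (k : ℕ) (x : T) :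
    rad m φ R k x ≤ Metric.diam (Set.univ : Set T) := by
  cases k with
  | zero => exact le_rfl
  | succ k => exact csInf_le (radSet_bddBelow m φ R k x) (diam_mem_radSet m φ R hmono hφ1 hR k x)

lemma rad_anti [IsProbabilityMeasure m]
    (hmono : MonotoneOn φ (Set.Ici 0)) (hφ1 : φ 1 = 1) (hR : 1 ≤ R) {j k : ℕ}
    (hj : 1 ≤ j) (hjk : j ≤ k) (x : T) :
    rad m φ R k x ≤ rad m φ R j x := by
  obtain ⟨j', rfl⟩ : ∃ j', j = j' + 1 := ⟨j - 1, by omega⟩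
  obtain ⟨k', rfl⟩ : ∃ k', k = k' + 1 := ⟨k - 1, by omega⟩
  refine csInf_le_csInf (radSet_bddBelow m φ R k' x)
    (radSet_nonempty m φ R hmono hφ1 hR j' x) ?_
  intro ε hε
  refine ⟨hε.1, le_trans hε.2 ?_⟩
  exact ENNReal.ofReal_le_ofReal
    (hmono (by positivity : (0:ℝ) ≤ R ^ (j'+1)) (by positivity : (0:ℝ) ≤ R ^ (k'+1))
      (pow_le_pow_right₀ hR (by omega)))

lemma rad_lip [IsProbabilityMeasure m]
    (hmono : MonotoneOn φ (Set.Ici 0)) (hφ1 : φ 1 = 1) (hR : 1 ≤ R) (k : ℕ) (u y : T) :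
    rad m φ R k y ≤ rad m φ R k u + dist y u := by
  cases k with
  | zero => simp only [rad]; linarith [dist_nonneg (x := y) (y := u)]
  | succ k =>
    show sInf _ ≤ sInf _ + dist y u
    have hkey : ∀ ε ∈ {ε : ℝ | 0 ≤ ε ∧
        1 / m (Metric.closedBall u ε) ≤ ENNReal.ofReal (φ (R ^ (k + 1)))},
        sInf {ε : ℝ | 0 ≤ ε ∧
          1 / m (Metric.closedBall y ε) ≤ ENNReal.ofReal (φ (R ^ (k + 1)))} ≤ ε + dist y u := by
      intro ε hε
      refine csInf_le (radSet_bddBelow m φ R k y) ?_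
      have hd : (0:ℝ) ≤ dist y u := dist_nonneg
      refine ⟨by linarith [hε.1], ?_⟩
      refine le_trans ?_ hε.2
      have hsub : Metric.closedBall u ε ⊆ Metric.closedBall y (ε + dist y u) := by
        intro z hz
        rw [Metric.mem_closedBall] at *
        calc dist z y ≤ dist z u + dist u y := dist_triangle _ _ _
        _ ≤ ε + dist y u := by rw [dist_comm u y]; linarith
      have := measure_mono (μ := m) hsub
      rw [one_div, one_div]
      exact ENNReal.inv_le_inv.2 this
    rw [← sub_le_iff_le_add]
    refine le_csInf (radSet_nonempty m φ R hmono hφ1 hR k u) ?_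
    intro ε hε
    have := hkey ε hε
    linarith

lemma radl_nonneg (k l : ℕ) (x : T) : 0 ≤ radl m φ R k l x := by
  refine Finset.sum_nonneg fun i _ => ?_
  have := rad_nonneg m φ R i x
  positivity

lemma radl_succ {k l : ℕ} (h : k < l) (x : T) :
    radl m φ R k l x = rad m φ R k x + 2 * radl m φ R (k + 1) l x := by
  unfold radl
  rw [← Finset.Ico_add_one_right_eq_Icc, Finset.sum_eq_sum_Ico_succ_bot (by omega : k < l + 1)]
  rw [Finset.Ico_add_one_right_eq_Icc]
  simp only [Nat.sub_self, pow_zero, one_mul]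
  congr 1
  rw [Finset.mul_sum]
  refine Finset.sum_congr rfl fun i hi => ?_
  rw [Finset.mem_Icc] at hi
  have h2 : i - k = (i - (k + 1)) + 1 := by omega
  rw [h2, pow_succ]
  ring

lemma estim [IsProbabilityMeasure m]
    (hmono : MonotoneOn φ (Set.Ici 0)) (hφ1 : φ 1 = 1) (hR : 1 ≤ R)
    {k l : ℕ} (hkl : k < l) (s t u w : T)
    (hu : dist u s ≤ radl m φ R (k + 1) l s)
    (hw : dist w s ≤ radl m φ R (k + 1) l s ∨ dist w t ≤ radl m φ R (k + 1) l t)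
    (hr : rad m φ R k u ≤ dist w u) :
    radl m φ R k l s ≤
      5 * max (radl m φ R (k + 1) l s) (radl m φ R (k + 1) l t) + 2 * dist s t ∧
    radl m φ R k l t ≤
      5 * max (radl m φ R (k + 1) l s) (radl m φ R (k + 1) l t) + 2 * dist s t ∧
    radl m φ R k l s + radl m φ R k l t ≤
      2 * (radl m φ R (k + 1) l s + radl m φ R (k + 1) l t) +
        6 * max (radl m φ R (k + 1) l s) (radl m φ R (k + 1) l t) + 3 * dist s t := by
  set σ' := radl m φ R (k + 1) l s with hσ'
  set θ' := radl m φ R (k + 1) l t with hθ'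
  set M' := max σ' θ' with hM'
  have hσM : σ' ≤ M' := le_max_left _ _
  have hθM : θ' ≤ M' := le_max_right _ _
  have hσ0 : 0 ≤ σ' := radl_nonneg m φ R _ _ _
  have hθ0 : 0 ≤ θ' := radl_nonneg m φ R _ _ _
  have hd0 : (0:ℝ) ≤ dist s t := dist_nonneg
  have hss : radl m φ R k l s = rad m φ R k s + 2 * σ' := radl_succ m φ R hkl s
  have hst : radl m φ R k l t = rad m φ R k t + 2 * θ' := radl_succ m φ R hkl t
  have hlips : rad m φ R k s ≤ rad m φ R k u + dist s u := rad_lip m φ R hmono hφ1 hR k u s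
  have hlipt : rad m φ R k t ≤ rad m φ R k s + dist t s := rad_lip m φ R hmono hφ1 hR k s t
  have hdts : dist t s = dist s t := dist_comm t s
  have hdsu : dist s u ≤ σ' := by rw [dist_comm]; exact hu
  rcases hw with hws | hwt
  · have hru : rad m φ R k u ≤ 2 * σ' := by
      calc rad m φ R k u ≤ dist w u := hr
      _ ≤ dist w s + dist s u := dist_triangle _ _ _
      _ ≤ 2 * σ' := by linarith
    have hs3 : rad m φ R k s ≤ 3 * σ' := by linarith
    have ht3 : rad m φ R k t ≤ 3 * σ' + dist s t := by linarith
    refine ⟨by linarith, by linarith, by linarith⟩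
  · have hru : rad m φ R k u ≤ θ' + dist s t + σ' := by
      calc rad m φ R k u ≤ dist w u := hr
      _ ≤ dist w t + dist t s + dist s u := dist_triangle4 w t s u
      _ ≤ θ' + dist s t + σ' := by linarith
    have hs3 : rad m φ R k s ≤ θ' + dist s t + 2 * σ' := by linarith
    have ht3 : rad m φ R k t ≤ θ' + 2 * dist s t + 2 * σ' := by linarith
    refine ⟨by linarith, by linarith, by linarith⟩

end Aux

/-! ### Numeric lemmas -/

lemma numeric_core (x S5 S2 xn yn zn P d : ℝ)
    (h1x : 0 < 1 - x) (hx0 : 0 < x)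
    (hq : S5 * (1 - x) = 1 - xn * x)
    (hS2ge : 1 ≤ S2)
    (key : 2 * xn * (1 - 2 * x) ≤ (1 + yn) * (1 - x))
    (hxn0 : 0 ≤ xn) (hxn1 : xn ≤ 1) (hzn : zn ≤ yn) (hyn0 : 0 ≤ yn)
    (hP : 0 ≤ P) (hd : 0 ≤ d) :
    (2 * S5 - S2) * P + (S5 - S2) * d + ((2 * xn - yn) * P + ((xn - yn) + zn) * d)
      ≤ 1 / (1 - x) * (2 * P + 3 / 2 * d) := by
  have hA : 2 * S5 - S2 + (2 * xn - yn) ≤ 2 * (1 / (1 - x)) := by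
    rw [show 2 * (1 / (1 - x)) = 2 / (1 - x) by ring, le_div_iff₀ h1x]
    nlinarith [key, hq, mul_nonneg (sub_nonneg.2 hS2ge) h1x.le]
  have hS5le : S5 ≤ 1 / (1 - x) := by
    rw [le_div_iff₀ h1x]
    nlinarith [hq, mul_nonneg hxn0 hx0.le]
  have hB : S5 - S2 + ((xn - yn) + zn) ≤ 3 / 2 * (1 / (1 - x)) := by
    have hKpos : 0 < 1 / (1 - x) := by positivity
    linarith
  nlinarith [mul_le_mul_of_nonneg_right hA hP, mul_le_mul_of_nonneg_right hB hd]

lemma numeric (R : ℝ) (hR : 5 < R) (n : ℕ) (P d : ℝ) (hP : 0 ≤ P) (hd : 0 ≤ d) :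
    (∑ j ∈ Finset.range (n + 1),
        (1 / R) ^ j * ((2 * 5 ^ j - 2 ^ j) * P + ((5:ℝ) ^ j - 2 ^ j) * d))
      + (1 / R) ^ n * ((2 * 5 ^ n - 2 ^ n) * P + (((5:ℝ) ^ n - 2 ^ n) + 1) * d)
      ≤ R / (R - 5) * (2 * P + 3 / 2 * d) := by
  have hR0 : (0:ℝ) < R := by linarith
  set x := 5 / R with hxd
  set y := 2 / R with hyd
  set z := 1 / R with hzd
  have hx0 : 0 < x := by positivity
  have hx1 : x < 1 := by rw [hxd, div_lt_one hR0]; linarith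
  have hy0 : 0 < y := by positivity
  have hz0 : 0 < z := by positivity
  have hzy : z ≤ y := by rw [hzd, hyd]; gcongr <;> linarith
  have h1x : 0 < 1 - x := by linarith
  have hx5 : ∀ j : ℕ, x ^ j = 5 ^ j * z ^ j := by
    intro j; rw [hxd, hzd, div_pow, div_pow, one_pow, mul_one_div]
  have hy2 : ∀ j : ℕ, y ^ j = 2 ^ j * z ^ j := by
    intro j; rw [hyd, hzd, div_pow, div_pow, one_pow, mul_one_div]
  set S5 := ∑ j ∈ Finset.range (n + 1), x ^ j with hS5d
  set S2 := ∑ j ∈ Finset.range (n + 1), y ^ j with hS2d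
  have hterm : ∀ j : ℕ, (1 / R) ^ j * ((2 * 5 ^ j - 2 ^ j) * P + ((5:ℝ) ^ j - 2 ^ j) * d)
      = (2 * x ^ j - y ^ j) * P + (x ^ j - y ^ j) * d := by
    intro j; rw [hx5, hy2, ← hzd]; ring
  have hsum : (∑ j ∈ Finset.range (n + 1),
      (1 / R) ^ j * ((2 * 5 ^ j - 2 ^ j) * P + ((5:ℝ) ^ j - 2 ^ j) * d))
      = (2 * S5 - S2) * P + (S5 - S2) * d := by
    rw [Finset.sum_congr rfl fun j _ => hterm j]
    rw [Finset.sum_add_distrib, ← Finset.sum_mul, ← Finset.sum_mul,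
      Finset.sum_sub_distrib, Finset.sum_sub_distrib, ← Finset.mul_sum]
  have hlast : (1 / R) ^ n * ((2 * 5 ^ n - 2 ^ n) * P + (((5:ℝ) ^ n - 2 ^ n) + 1) * d)
      = (2 * x ^ n - y ^ n) * P + ((x ^ n - y ^ n) + z ^ n) * d := by
    rw [hx5, hy2, ← hzd]; ring
  rw [hsum, hlast]
  have hK : R / (R - 5) = 1 / (1 - x) := by
    rw [hxd]; field_simp
  rw [hK]
  have hgeom : S5 = (1 - x ^ (n + 1)) / (1 - x) := by
    rw [hS5d, geom_sum_eq (ne_of_lt hx1)]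
    rw [div_eq_div_iff (ne_of_lt (show x - 1 < 0 by linarith)) (ne_of_gt h1x)]
    ring
  have hq : S5 * (1 - x) = 1 - x ^ n * x := by
    rw [hgeom, div_mul_cancel₀ _ (ne_of_gt h1x), pow_succ]
  have hS2ge : 1 ≤ S2 := by
    have h := Finset.single_le_sum (f := fun j : ℕ => y ^ j)
      (fun j _ => by positivity) (Finset.mem_range.2 (Nat.succ_pos n))
    simpa using h
  have key : 2 * x ^ n * (1 - 2 * x) ≤ (1 + y ^ n) * (1 - x) := by
    rcases Nat.eq_zero_or_pos n with rfl | hn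
    · simp; nlinarith
    · have hxn : x ^ n ≤ x := by
        calc x ^ n ≤ x ^ 1 := pow_le_pow_of_le_one hx0.le hx1.le hn
        _ = x := pow_one x
      have hxn0 : (0:ℝ) ≤ x ^ n := by positivity
      have hyn0 : (0:ℝ) ≤ y ^ n := by positivity
      rcases le_or_gt (1 - 2 * x) 0 with h | h
      · nlinarith
      · nlinarith [mul_le_mul_of_nonneg_right hxn h.le, sq_nonneg (2 * x - 3 / 4)]
  exact numeric_core x S5 S2 (x ^ n) (y ^ n) (z ^ n) P d h1x hx0 hq hS2ge key
    (by positivity) (pow_le_one₀ hx0.le hx1.le) (pow_le_pow_left₀ hz0.le hzy n)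
    (by positivity) hP hd

/-- Lemma 7 of the paper. -/
theorem statement17 (T : Type) [MetricSpace T] [CompactSpace T]
    [MeasurableSpace T] [BorelSpace T]
    (m : Measure T) (hm : IsProbabilityMeasure m)
    (φ : ℝ → ℝ) (hφ : IsYoungFunction φ) (hφ1 : φ 1 = 1)
    (R : ℝ) (hR : 5 < R)
    (s t : T) (hτfin : tauDist m φ s t ≠ ⊤)
    (c : ℕ)
    (hc : (dist s t < Metric.diam (Set.univ : Set T) ∧
            ∃ a b : ℕ, 1 ≤ a ∧ 1 ≤ b ∧
              rad m φ R a s ≤ dist s t ∧ dist s t < rad m φ R (a - 1) s ∧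
              rad m φ R b t ≤ dist s t ∧ dist s t < rad m φ R (b - 1) t ∧
              c = max a b) ∨
          (dist s t = Metric.diam (Set.univ : Set T) ∧ c = 0))
    (l : ℕ) (hl : c < l)
    (τs τt : ℕ)
    (hτs : IsGreatest (tauSet m φ R l s t s) τs)
    (hτt : IsGreatest (tauSet m φ R l s t t) τt) :
    min (radl m φ R (min τs τt) l s + radl m φ R (min τs τt) l t + dist s t)
        (Metric.diam (Set.univ : Set T)) * R ^ (min τs τt) +
      ∑ k ∈ Finset.Icc (min τs τt) c,
        R ^ k * (radl m φ R k l s + radl m φ R k l t) ≤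
      R / (R - 5) * R ^ c *
        (3 / 2 * dist s t + 2 * (radl m φ R c l s + radl m φ R c l t)) := by
  haveI := hm
  have hmono : MonotoneOn φ (Set.Ici 0) := hφ.1
  have hR1 : (1:ℝ) ≤ R := by linarith
  have hR0 : (0:ℝ) < R := by linarith
  set τ := min τs τt with hτdef
  have hτs1 : 1 ≤ τs := hτs.1.1
  have hτt1 : 1 ≤ τt := hτt.1.1
  have hd0 : (0:ℝ) ≤ dist s t := dist_nonneg
  -- `t` is strictly inside the ball around `s` of radius `r_{τs - 1}(s)`
  have hts : dist t s < rad m φ R (τs - 1) s := by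
    have hmem := hτs.1.2 s (Metric.mem_closedBall_self (radl_nonneg m φ R _ _ _))
    have ht : t ∈ Metric.closedBall t (radl m φ R τs l t) :=
      Metric.mem_closedBall_self (radl_nonneg m φ R _ _ _)
    exact Metric.mem_ball.1 (hmem (Set.mem_union_right _ ht))
  rcases hc with ⟨hdlt, a, b, ha1, hb1, has, has', hbt, hbt', hcab⟩ | ⟨hdD, -⟩
  swap
  · exfalso
    have h1 : rad m φ R (τs - 1) s ≤ Metric.diam (Set.univ : Set T) :=
      rad_le_diam m φ R hmono hφ1 hR1 _ s
    rw [dist_comm] at hts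
    rw [← hdD] at h1
    linarith
  -- τ ≤ c
  have hτsa : τs ≤ a := by
    by_contra hcon
    push_neg at hcon
    have h2 : rad m φ R (τs - 1) s ≤ rad m φ R a s :=
      rad_anti m φ R hmono hφ1 hR1 ha1 (by omega) s
    rw [dist_comm] at hts
    linarith
  have hτc : τ ≤ c := by
    calc τ ≤ τs := min_le_left _ _
    _ ≤ a := hτsa
    _ ≤ c := hcab ▸ le_max_left a b
  -- the one-step recursion coming from failure of the tauSet condition
  have key : ∀ k, τ ≤ k → k < c →
      radl m φ R k l s ≤
        5 * max (radl m φ R (k + 1) l s) (radl m φ R (k + 1) l t) + 2 * dist s t ∧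
      radl m φ R k l t ≤
        5 * max (radl m φ R (k + 1) l s) (radl m φ R (k + 1) l t) + 2 * dist s t ∧
      radl m φ R k l s + radl m φ R k l t ≤
        2 * (radl m φ R (k + 1) l s + radl m φ R (k + 1) l t) +
          6 * max (radl m φ R (k + 1) l s) (radl m φ R (k + 1) l t) + 3 * dist s t := by
    intro k hk hkc
    have hkl : k < l := by omega
    have hfail : ∃ x : T, (x = s ∨ x = t) ∧ (k + 1) ∉ tauSet m φ R l s t x := by
      rcases le_total τs τt with hle | hle
      · refine ⟨s, Or.inl rfl, fun hmem => ?_⟩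
        have h1 := hτs.2 hmem
        have h2 : τ = τs := min_eq_left hle
        omega
      · refine ⟨t, Or.inr rfl, fun hmem => ?_⟩
        have h1 := hτt.2 hmem
        have h2 : τ = τt := min_eq_right hle
        omega
    obtain ⟨x, hx, hnm⟩ := hfail
    simp only [tauSet, Set.mem_setOf_eq, not_and] at hnm
    have h2 := hnm (by omega)
    push_neg at h2
    obtain ⟨u, hu, hsub⟩ := h2
    obtain ⟨w, hw, hwu⟩ := Set.not_subset.1 hsub
    have hr : rad m φ R (k + 1 - 1) u ≤ dist w u :=
      not_lt.1 (fun hlt => hwu (Metric.mem_ball.2 hlt))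
    simp only [Nat.add_sub_cancel] at hr
    have hw' : dist w s ≤ radl m φ R (k + 1) l s ∨ dist w t ≤ radl m φ R (k + 1) l t := by
      rcases hw with h | h
      · exact Or.inl (Metric.mem_closedBall.1 h)
      · exact Or.inr (Metric.mem_closedBall.1 h)
    rcases hx with rfl | rfl
    · exact estim m φ R hmono hφ1 hR1 hkl x t u w (Metric.mem_closedBall.1 hu) hw' hr
    · have h3 := estim m φ R hmono hφ1 hR1 hkl x s u w (Metric.mem_closedBall.1 hu) hw'.symm hr
      have hmc : max (radl m φ R (k + 1) l x) (radl m φ R (k + 1) l s)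
          = max (radl m φ R (k + 1) l s) (radl m φ R (k + 1) l x) := max_comm _ _
      have hdc : dist x s = dist s x := dist_comm x s
      obtain ⟨h31, h32, h33⟩ := h3
      rw [hmc, hdc] at h31 h32 h33
      exact ⟨h32, h31, by linarith⟩
  -- the downward induction
  set Pc := radl m φ R c l s + radl m φ R c l t with hPcd
  clear_value Pc
  have hPc0 : 0 ≤ Pc := by
    have := radl_nonneg m φ R c l s
    have := radl_nonneg m φ R c l t
    rw [hPcd]; linarith
  have bound : ∀ j, j ≤ c - τ →
      max (radl m φ R (c - j) l s) (radl m φ R (c - j) l t)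
          ≤ 5 ^ j * Pc + ((5:ℝ) ^ j - 1) / 2 * dist s t ∧
      radl m φ R (c - j) l s + radl m φ R (c - j) l t
          ≤ (2 * 5 ^ j - 2 ^ j) * Pc + ((5:ℝ) ^ j - 2 ^ j) * dist s t := by
    intro j
    induction j with
    | zero =>
      intro _
      have h1 : radl m φ R c l s ≤ Pc := by
        have := radl_nonneg m φ R c l t; rw [hPcd]; linarith
      have h2 : radl m φ R c l t ≤ Pc := by
        have := radl_nonneg m φ R c l s; rw [hPcd]; linarith
      constructor
      · have he : (5:ℝ) ^ 0 * Pc + ((5:ℝ) ^ 0 - 1) / 2 * dist s t = Pc := by norm_num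
        rw [Nat.sub_zero, he]
        exact max_le h1 h2
      · have he : (2 * (5:ℝ) ^ 0 - 2 ^ 0) * Pc + ((5:ℝ) ^ 0 - 2 ^ 0) * dist s t = Pc := by
          norm_num
        rw [Nat.sub_zero, he, hPcd]
    | succ j ih =>
      intro hj
      obtain ⟨ih1, ih2⟩ := ih (by omega)
      have hq1 : c - j = (c - (j + 1)) + 1 := by omega
      obtain ⟨e1, e2, e3⟩ := key (c - (j + 1)) (by omega) (by omega)
      rw [← hq1] at e1 e2 e3
      have p5 : (5:ℝ) ^ (j + 1) = 5 * 5 ^ j := by rw [pow_succ]; ring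
      have p2 : (2:ℝ) ^ (j + 1) = 2 * 2 ^ j := by rw [pow_succ]; ring
      simp only [pow_succ]
      constructor
      · exact max_le (by nlinarith) (by nlinarith)
      · refine le_trans e3 ?_
        linarith [ih1, ih2]
  -- summation
  set n := c - τ with hnd
  have hcτ : τ = c - n := by omega
  have hsum_eq : (∑ k ∈ Finset.Icc τ c, R ^ k * (radl m φ R k l s + radl m φ R k l t))
      = ∑ j ∈ Finset.range (n + 1),
          R ^ (c - j) * (radl m φ R (c - j) l s + radl m φ R (c - j) l t) := by
    rw [← Finset.Ico_add_one_right_eq_Icc, Finset.sum_Ico_eq_sum_range]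
    have h1 : c + 1 - τ = n + 1 := by omega
    rw [h1, ← Finset.sum_range_reflect]
    refine Finset.sum_congr rfl fun j hj => ?_
    rw [Finset.mem_range] at hj
    have h2 : τ + (n + 1 - 1 - j) = c - j := by omega
    rw [h2]
  have hpow : ∀ j, j ≤ n → R ^ (c - j) = R ^ c * (1 / R) ^ j := by
    intro j hj
    rw [one_div, inv_pow, eq_comm, mul_inv_eq_iff_eq_mul₀ (by positivity), ← pow_add]
    congr 1
    omega
  have hsum_le : (∑ j ∈ Finset.range (n + 1),
        R ^ (c - j) * (radl m φ R (c - j) l s + radl m φ R (c - j) l t))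
      ≤ R ^ c * ∑ j ∈ Finset.range (n + 1),
          (1 / R) ^ j * ((2 * 5 ^ j - 2 ^ j) * Pc + ((5:ℝ) ^ j - 2 ^ j) * dist s t) := by
    rw [Finset.mul_sum]
    refine Finset.sum_le_sum fun j hj => ?_
    rw [Finset.mem_range] at hj
    rw [hpow j (by omega), mul_assoc]
    refine mul_le_mul_of_nonneg_left ?_ (by positivity)
    exact mul_le_mul_of_nonneg_left ((bound j (by omega)).2) (by positivity)
  have hdtau : min (radl m φ R τ l s + radl m φ R τ l t + dist s t)
        (Metric.diam (Set.univ : Set T)) * R ^ τ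
      ≤ R ^ c * ((1 / R) ^ n * ((2 * 5 ^ n - 2 ^ n) * Pc
          + (((5:ℝ) ^ n - 2 ^ n) + 1) * dist s t)) := by
    have h1 := (bound n le_rfl).2
    rw [← hcτ] at h1
    have h2 : min (radl m φ R τ l s + radl m φ R τ l t + dist s t)
        (Metric.diam (Set.univ : Set T))
        ≤ radl m φ R τ l s + radl m φ R τ l t + dist s t := min_le_left _ _
    have h3 : R ^ τ = R ^ c * (1 / R) ^ n := by rw [hcτ]; exact hpow n le_rfl
    calc min (radl m φ R τ l s + radl m φ R τ l t + dist s t)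
          (Metric.diam (Set.univ : Set T)) * R ^ τ
        ≤ (radl m φ R τ l s + radl m φ R τ l t + dist s t) * R ^ τ :=
          mul_le_mul_of_nonneg_right h2 (by positivity)
      _ ≤ ((2 * 5 ^ n - 2 ^ n) * Pc + (((5:ℝ) ^ n - 2 ^ n) + 1) * dist s t) * R ^ τ :=
          mul_le_mul_of_nonneg_right (by linarith) (by positivity)
      _ = R ^ c * ((1 / R) ^ n * ((2 * 5 ^ n - 2 ^ n) * Pc
            + (((5:ℝ) ^ n - 2 ^ n) + 1) * dist s t)) := by rw [h3]; ring
  calc min (radl m φ R τ l s + radl m φ R τ l t + dist s t)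
        (Metric.diam (Set.univ : Set T)) * R ^ τ +
      ∑ k ∈ Finset.Icc τ c, R ^ k * (radl m φ R k l s + radl m φ R k l t)
      ≤ R ^ c * ((1 / R) ^ n * ((2 * 5 ^ n - 2 ^ n) * Pc
            + (((5:ℝ) ^ n - 2 ^ n) + 1) * dist s t))
        + R ^ c * ∑ j ∈ Finset.range (n + 1),
            (1 / R) ^ j * ((2 * 5 ^ j - 2 ^ j) * Pc + ((5:ℝ) ^ j - 2 ^ j) * dist s t) := by
        rw [hsum_eq]; exact add_le_add hdtau hsum_le
    _ = R ^ c * ((∑ j ∈ Finset.range (n + 1),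
            (1 / R) ^ j * ((2 * 5 ^ j - 2 ^ j) * Pc + ((5:ℝ) ^ j - 2 ^ j) * dist s t))
          + (1 / R) ^ n * ((2 * 5 ^ n - 2 ^ n) * Pc
            + (((5:ℝ) ^ n - 2 ^ n) + 1) * dist s t)) := by ring
    _ ≤ R ^ c * (R / (R - 5) * (2 * Pc + 3 / 2 * dist s t)) :=
        mul_le_mul_of_nonneg_left (numeric R hR n Pc (dist s t) hPc0 hd0) (by positivity)
    _ = R / (R - 5) * R ^ c * (3 / 2 * dist s t + 2 * Pc) := by ring
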